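/- For density matrices ρ₀, ρ₁, one has 2 arccos Tr (ρ₀^{1/2}ρ₁ρ₀^{1/2})^{1/2} ≤ 2 arccos Tr ρ₀#ρ₁, i.e., the Bures geodesic distance on density matrices is bounded above by the arccos of the trace of the geometric mean. -/

import Mathlib

open Matrix ComplexOrder

open Classical in
noncomputable def msqrt {n : ℕ} (A : Matrix (Fin n) (Fin n) ℂ) : Matrix (Fin n) (Fin n) ℂ :=
  if h : A.PosSemidef then
    h.1.eigenvectorUnitary.1 * diagonal ((↑) ∘ (Real.sqrt ·) ∘ h.1.eigenvalues) *
      (star h.1.eigenvectorUnitary : Matrix (Fin n) (Fin n) ℂ)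
  else 0

noncomputable def geoMean {n : ℕ} (ρ₀ ρ₁ : Matrix (Fin n) (Fin n) ℂ) : Matrix (Fin n) (Fin n) ℂ :=
  msqrt ρ₀ * msqrt ((msqrt ρ₀)⁻¹ * ρ₁ * (msqrt ρ₀)⁻¹) * msqrt ρ₀

noncomputable def frobNorm {n : ℕ} (X : Matrix (Fin n) (Fin n) ℂ) : ℝ :=
  Real.sqrt (Matrix.trace (Xᴴ * X)).re

noncomputable def Matrix.PosSemidef.sqrt {n : ℕ} {A : Matrix (Fin n) (Fin n) ℂ}
    (h : A.PosSemidef) : Matrix (Fin n) (Fin n) ℂ :=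
  h.1.eigenvectorUnitary.1 * diagonal ((↑) ∘ (Real.sqrt ·) ∘ h.1.eigenvalues) *
    (star h.1.eigenvectorUnitary : Matrix (Fin n) (Fin n) ℂ)

lemma Matrix.PosSemidef.sqrt_eq_cfc {n : ℕ} {A : Matrix (Fin n) (Fin n) ℂ}
    (h : A.PosSemidef) : h.sqrt = cfc Real.sqrt A := by
  rw [h.1.cfc_eq]
  rfl

lemma Matrix.PosSemidef.sqrt_mul_self {n : ℕ} {A : Matrix (Fin n) (Fin n) ℂ}
    (h : A.PosSemidef) : h.sqrt * h.sqrt = A := by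
  have hsa : IsSelfAdjoint A := h.1
  rw [h.sqrt_eq_cfc, ← cfc_mul Real.sqrt Real.sqrt A]
  conv_rhs => rw [← cfc_id' ℝ A]
  refine cfc_congr fun x hx => ?_
  have : 0 ≤ x := by
    rw [h.1.spectrum_real_eq_range_eigenvalues] at hx
    obtain ⟨i, rfl⟩ := hx
    exact h.eigenvalues_nonneg i
  exact Real.mul_self_sqrt this

lemma Matrix.PosSemidef.posSemidef_sqrt {n : ℕ} {A : Matrix (Fin n) (Fin n) ℂ}
    (h : A.PosSemidef) : h.sqrt.PosSemidef := by
  open MatrixOrder in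
  rw [h.sqrt_eq_cfc, ← Matrix.nonneg_iff_posSemidef]
  open MatrixOrder in
  exact cfc_nonneg fun x _ => Real.sqrt_nonneg x

lemma trace_nonneg_of_psd {n : ℕ} {M : Matrix (Fin n) (Fin n) ℂ} (hM : M.PosSemidef) :
    0 ≤ M.trace := by
  rw [Matrix.trace]
  apply Finset.sum_nonneg
  intro i _
  have := hM.2 (Finsupp.single i 1)
  simpa [Finsupp.sum_single_index] using this

theorem key {n : ℕ} (ρ₀ ρ₁ : Matrix (Fin n) (Fin n) ℂ)
    (h₀ : ρ₀.PosDef) (h₁ : ρ₁.PosDef) :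
    (Matrix.trace (geoMean ρ₀ ρ₁)).re
      ≤ (Matrix.trace (msqrt (msqrt ρ₀ * ρ₁ * msqrt ρ₀))).re := by
  have hp0 := h₀.posSemidef
  set A := hp0.sqrt with hAdef
  have hmsA : msqrt ρ₀ = A := by rw [msqrt, dif_pos hp0]; rfl
  have hAA : A * A = ρ₀ := hp0.sqrt_mul_self
  have hAH : Aᴴ = A := hp0.posSemidef_sqrt.isHermitian
  have hdetA : IsUnit A.det := by
    have : A.det * A.det = ρ₀.det := by rw [← Matrix.det_mul, hAA]
    have h2 : ρ₀.det ≠ 0 := h₀.det_pos.ne'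
    exact isUnit_iff_ne_zero.mpr (fun h => h2 (by rw [← this, h, zero_mul]))
  have hAiH : (A⁻¹)ᴴ = A⁻¹ := by rw [Matrix.conjTranspose_nonsing_inv, hAH]
  -- C = A⁻¹ ρ₁ A⁻¹
  have hC : (A⁻¹ * ρ₁ * A⁻¹).PosSemidef := by
    have := h₁.posSemidef.conjTranspose_mul_mul_same A⁻¹
    rwa [hAiH] at this
  set S := hC.sqrt with hSdef
  have hmsC : msqrt (A⁻¹ * ρ₁ * A⁻¹) = S := by rw [msqrt, dif_pos hC]; rfl
  have hSS : S * S = A⁻¹ * ρ₁ * A⁻¹ := hC.sqrt_mul_self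
  have hSH : Sᴴ = S := hC.posSemidef_sqrt.isHermitian
  -- D = A ρ₁ A
  have hD : (A * ρ₁ * A).PosSemidef := by
    have := h₁.posSemidef.conjTranspose_mul_mul_same A
    rwa [hAH] at this
  set T := hD.sqrt with hTdef
  have hmsD : msqrt (A * ρ₁ * A) = T := by rw [msqrt, dif_pos hD]; rfl
  have hTT : T * T = A * ρ₁ * A := hD.sqrt_mul_self
  have hTpsd : T.PosSemidef := hD.posSemidef_sqrt
  have hdetT : IsUnit T.det := by
    have h3 : T.det * T.det = A.det * ρ₁.det * A.det := by
      rw [← Matrix.det_mul, hTT, Matrix.det_mul, Matrix.det_mul]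
    have h4 : A.det * ρ₁.det * A.det ≠ 0 :=
      mul_ne_zero (mul_ne_zero hdetA.ne_zero h₁.det_pos.ne') hdetA.ne_zero
    exact isUnit_iff_ne_zero.mpr (fun h => h4 (by rw [← h3, h, zero_mul]))
  -- R = sqrt T
  set R := hTpsd.sqrt with hRdef
  have hRR : R * R = T := hTpsd.sqrt_mul_self
  have hRH : Rᴴ = R := hTpsd.posSemidef_sqrt.isHermitian
  have hdetR : IsUnit R.det := by
    have h3 : R.det * R.det = T.det := by rw [← Matrix.det_mul, hRR]
    exact isUnit_iff_ne_zero.mpr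
      (fun h => hdetT.ne_zero (by rw [← h3, h, zero_mul]))
  have hRiH : (R⁻¹)ᴴ = R⁻¹ := by rw [Matrix.conjTranspose_nonsing_inv, hRH]
  -- N = A * A * S
  set N := A * A * S with hNdef
  have hNH : Nᴴ = S * (A * A) := by
    rw [hNdef, Matrix.conjTranspose_mul, Matrix.conjTranspose_mul, hAH, hSH]
  have hNN : N * Nᴴ = A * ρ₁ * A := by
    rw [hNH, hNdef]
    calc A * A * S * (S * (A * A))
        = A * (A * (S * S) * A) * A := by noncomm_ring
      _ = A * (A * (A⁻¹ * ρ₁ * A⁻¹) * A) * A := by rw [hSS]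
      _ = A * ρ₁ * A := by
          rw [Matrix.mul_assoc A⁻¹ ρ₁ A⁻¹, Matrix.mul_nonsing_inv_cancel_left _ _ hdetA,
            Matrix.mul_assoc ρ₁ A⁻¹ A, Matrix.nonsing_inv_mul _ hdetA, Matrix.mul_one]
  -- trace N = trace geoMean
  have htrN : N.trace = (geoMean ρ₀ ρ₁).trace := by
    rw [geoMean, hmsA, hmsC, hNdef, Matrix.trace_mul_comm (A*S) A, ← Matrix.mul_assoc]
  -- Z = R - R⁻¹ N
  set Z := R - R⁻¹ * N with hZdef
  have hZZ : Zᴴ * Z = T - N - Nᴴ + Nᴴ * (R⁻¹ * (R⁻¹ * N)) := by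
    rw [hZdef, Matrix.conjTranspose_sub, Matrix.conjTranspose_mul, hRH, hRiH]
    have e1 : R * (R⁻¹ * N) = N := Matrix.mul_nonsing_inv_cancel_left _ _ hdetR
    have e2 : Nᴴ * R⁻¹ * R = Nᴴ := by
      rw [Matrix.mul_assoc, Matrix.nonsing_inv_mul _ hdetR, Matrix.mul_one]
    calc (R - Nᴴ * R⁻¹) * (R - R⁻¹ * N)
        = R * R - R * (R⁻¹ * N) - Nᴴ * R⁻¹ * R + Nᴴ * (R⁻¹ * (R⁻¹ * N)) := by noncomm_ring
      _ = T - N - Nᴴ + Nᴴ * (R⁻¹ * (R⁻¹ * N)) := by rw [hRR, e1, e2]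
  have hlast : (Nᴴ * (R⁻¹ * (R⁻¹ * N))).trace = T.trace := by
    rw [Matrix.trace_mul_comm]
    have h6 : R⁻¹ * (R⁻¹ * N) * Nᴴ = T := by
      rw [Matrix.mul_assoc, Matrix.mul_assoc, hNN, ← hTT, ← hRR,
        show (R*R)*(R*R) = R*(R*(R*R)) by noncomm_ring,
        Matrix.nonsing_inv_mul_cancel_left _ _ hdetR,
        Matrix.nonsing_inv_mul_cancel_left _ _ hdetR]
    rw [h6]
  have hpos : 0 ≤ (Zᴴ * Z).trace := trace_nonneg_of_psd (Matrix.posSemidef_conjTranspose_mul_self Z)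
  have htr : (Zᴴ * Z).trace = 2 * T.trace - N.trace - Nᴴ.trace := by
    rw [hZZ]
    simp only [Matrix.trace_add, Matrix.trace_sub, hlast]
    ring
  have hNHtr : Nᴴ.trace = star N.trace := Matrix.trace_conjTranspose N
  have hre : N.trace.re ≤ T.trace.re := by
    rw [htr, hNHtr] at hpos
    have h7 := (Complex.le_def.mp hpos).1
    simp at h7
    linarith
  rw [hmsA, hmsD, ← htrN]
  exact hre



theorem bures_le_geoMean_bound {n : ℕ} (ρ₀ ρ₁ : Matrix (Fin n) (Fin n) ℂ)
    (h₀ : ρ₀.PosDef) (h₁ : ρ₁.PosDef)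
    (ht₀ : Matrix.trace ρ₀ = 1) (ht₁ : Matrix.trace ρ₁ = 1) :
    2 * Real.arccos (Matrix.trace (msqrt (msqrt ρ₀ * ρ₁ * msqrt ρ₀))).re
      ≤ 2 * Real.arccos (Matrix.trace (geoMean ρ₀ ρ₁)).re := by
  have hkey := key ρ₀ ρ₁ h₀ h₁
  have h2 := Real.monotone_arcsin hkey
  simp only [Real.arccos]
  linarith
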